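/- For the pp-wave metric, at every point p ∈ ℝ⁴ the Ricci tensor satisfies Ric₁₁(p) = ∂₂∂₂H(p) + ∂₃∂₃H(p), and Ric_{ab}(p) = 0 for every pair of indices (a, b) ≠ (1, 1). -/

import Mathlib

noncomputable section

open scoped BigOperators

/-- Partial derivative of `f : ℝ⁴ → ℝ` in the `μ`-th coordinate direction. -/
def pd (μ : Fin 4) (f : (Fin 4 → ℝ) → ℝ) (p : Fin 4 → ℝ) : ℝ :=
  fderiv ℝ f p (Pi.single μ 1)

/-- The pp-wave metric `ds² = 2H du² + 2 du dv − dx² − dy²` in coordinates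
`(v,u,x,y)`. -/
def gmet (H : (Fin 4 → ℝ) → ℝ) (p : Fin 4 → ℝ) : Matrix (Fin 4) (Fin 4) ℝ :=
  Matrix.of fun μ ν =>
    if μ = 1 ∧ ν = 1 then 2 * H p
    else if (μ = 0 ∧ ν = 1) ∨ (μ = 1 ∧ ν = 0) then 1
    else if (μ = 2 ∧ ν = 2) ∨ (μ = 3 ∧ ν = 3) then (-1 : ℝ)
    else 0

/-- The pointwise inverse of the pp-wave metric. -/
def ginv (H : (Fin 4 → ℝ) → ℝ) (p : Fin 4 → ℝ) : Matrix (Fin 4) (Fin 4) ℝ :=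
  Matrix.of fun μ ν =>
    if μ = 0 ∧ ν = 0 then -2 * H p
    else if (μ = 0 ∧ ν = 1) ∨ (μ = 1 ∧ ν = 0) then 1
    else if (μ = 2 ∧ ν = 2) ∨ (μ = 3 ∧ ν = 3) then (-1 : ℝ)
    else 0

/-- Christoffel symbols `Γ^l_{μν}` of the Levi-Civita connection of the pp-wave metric. -/
def Γpp (H : (Fin 4 → ℝ) → ℝ) (l μ ν : Fin 4) (p : Fin 4 → ℝ) : ℝ :=
  (1 / 2) * ∑ σ : Fin 4, ginv H p l σ *
    (pd μ (fun q => gmet H q ν σ) p + pd ν (fun q => gmet H q μ σ) p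
      - pd σ (fun q => gmet H q μ ν) p)

/-- Riemann curvature components
`R^a_{bμν} = ∂_μ Γ^a_{bν} − ∂_ν Γ^a_{bμ} + Σ_γ (Γ^a_{γμ}Γ^γ_{bν} − Γ^a_{γν}Γ^γ_{bμ})`. -/
def Riem (H : (Fin 4 → ℝ) → ℝ) (a b μ ν : Fin 4) (p : Fin 4 → ℝ) : ℝ :=
  pd μ (Γpp H a b ν) p - pd ν (Γpp H a b μ) p
    + ∑ γ : Fin 4, (Γpp H a γ μ p * Γpp H γ b ν p - Γpp H a γ ν p * Γpp H γ b μ p)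

/-- Ricci tensor `Ric_{bν} = Σ_a R^a_{baν}`. -/
def Ricci (H : (Fin 4 → ℝ) → ℝ) (b ν : Fin 4) (p : Fin 4 → ℝ) : ℝ :=
  ∑ a : Fin 4, Riem H a b a ν p

/-- Scalar curvature `S = Σ_{β,ν} ginv^{βν} Ric_{βν}`. -/
def Scal (H : (Fin 4 → ℝ) → ℝ) (p : Fin 4 → ℝ) : ℝ :=
  ∑ b : Fin 4, ∑ ν : Fin 4, ginv H p b ν * Ricci H b ν p


/-!
The vector field `∂_v` is null and parallel, and the only nonzero Christoffel symbols are
`Γ^v_{uμ} = Γ^v_{μu} = ∂_μ H` and `Γ^x_{uu} = ∂_x H`, `Γ^y_{uu} = ∂_y H`; in particular `Γ^u = 0`.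
Hence the traces `Γ^a_{ba}` and all quadratic terms of the contracted curvature vanish, so
`Ric_{bν} = ∂_a Γ^a_{bν}`. Since `H`, and with it every `Γ^v_{bν}`, is independent of `v`,
only `∂_x Γ^x_{uu} + ∂_y Γ^y_{uu}` survives.
-/

lemma pd_zero (μ : Fin 4) (p : Fin 4 → ℝ) : pd μ 0 p = 0 := by
  simp [pd]

lemma pd_comm {f : (Fin 4 → ℝ) → ℝ} (hf : ContDiff ℝ 2 f) (a b : Fin 4) (p : Fin 4 → ℝ) :
    pd a (pd b f) p = pd b (pd a f) p := by
  have hf' : Differentiable ℝ (fderiv ℝ f) :=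
    (hf.fderiv_right (m := 1) le_rfl).differentiable one_ne_zero
  have hpd : ∀ v w : Fin 4 → ℝ,
      fderiv ℝ (fun q => fderiv ℝ f q w) p v = fderiv ℝ (fderiv ℝ f) p v w := fun v w => by
    rw [fderiv_clm_apply (hf' p) (differentiableAt_const w)]
    simp
  have hsymm : IsSymmSndFDerivAt ℝ f p :=
    hf.contDiffAt.isSymmSndFDerivAt (by simp [minSmoothness_of_isRCLikeNormedField])
  change fderiv ℝ (fun q => fderiv ℝ f q _) p _ = fderiv ℝ (fun q => fderiv ℝ f q _) p _
  rw [hpd, hpd, hsymm.eq]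

variable {H : (Fin 4 → ℝ) → ℝ}

lemma pd_zero_pd (hH : ContDiff ℝ 2 H) (h0 : ∀ p, pd 0 H p = 0) (ν : Fin 4) (p : Fin 4 → ℝ) :
    pd 0 (pd ν H) p = 0 := by
  rw [pd_comm hH, show pd 0 H = 0 from funext h0, pd_zero]

lemma pd_gmet (hH : Differentiable ℝ H) (μ ν σ : Fin 4) (p : Fin 4 → ℝ) :
    pd μ (fun q => gmet H q ν σ) p = if ν = 1 ∧ σ = 1 then 2 * pd μ H p else 0 := by
  fin_cases ν <;> fin_cases σ <;> simp [gmet, pd, fderiv_const_mul (hH p)]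

lemma Γpp_zero_eq (hH : Differentiable ℝ H) (h0 : ∀ p, pd 0 H p = 0) (μ ν : Fin 4) :
    Γpp H 0 μ ν = fun p => if μ = 1 then pd ν H p else if ν = 1 then pd μ H p else 0 := by
  funext p
  simp only [Γpp, Fin.sum_univ_four, pd_gmet hH, ginv, Matrix.of_apply]
  fin_cases μ <;> fin_cases ν <;> simp [h0 p]

lemma Γpp_one_eq_zero (hH : Differentiable ℝ H) (h0 : ∀ p, pd 0 H p = 0) (μ ν : Fin 4) :
    Γpp H 1 μ ν = 0 := by
  funext p
  simp only [Γpp, Fin.sum_univ_four, pd_gmet hH, ginv, Matrix.of_apply]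
  fin_cases μ <;> fin_cases ν <;> simp [h0 p]

lemma Γpp_transverse_eq (hH : Differentiable ℝ H) (l : Fin 4) (hl : 2 ≤ l) (μ ν : Fin 4) :
    Γpp H l μ ν = fun p => if μ = 1 ∧ ν = 1 then pd l H p else 0 := by
  funext p
  simp only [Γpp, Fin.sum_univ_four, pd_gmet hH, ginv, Matrix.of_apply]
  fin_cases l <;> fin_cases μ <;> fin_cases ν <;> simp_all

section ParallelNullVector

variable (hH : Differentiable ℝ H) (h0 : ∀ p, pd 0 H p = 0)
include hH h0

lemma Γpp_lower_zero_eq_zero (l ν : Fin 4) : Γpp H l 0 ν = 0 := by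
  funext p
  fin_cases l
  · simp [Γpp_zero_eq hH h0, h0]
  · simp [Γpp_one_eq_zero hH h0]
  all_goals simp [Γpp_transverse_eq hH]

lemma Γpp_contract_eq_zero (a b : Fin 4) : Γpp H a b a = 0 := by
  funext p
  fin_cases a
  · simp [Γpp_zero_eq hH h0, h0]
  · simp [Γpp_one_eq_zero hH h0]
  all_goals simp [Γpp_transverse_eq hH]

lemma Γpp_mul_Γpp_contract_eq_zero (a b γ ν : Fin 4) (p : Fin 4 → ℝ) :
    Γpp H a γ ν p * Γpp H γ b a p = 0 := by
  fin_cases γ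
  · simp [Γpp_lower_zero_eq_zero hH h0]
  · simp [Γpp_one_eq_zero hH h0]
  all_goals
    by_cases ha : a = 1
    · simp [ha, Γpp_one_eq_zero hH h0]
    · simp [ha, Γpp_transverse_eq hH]

lemma Riem_contract_eq_pd (a b ν : Fin 4) (p : Fin 4 → ℝ) :
    Riem H a b a ν p = pd a (Γpp H a b ν) p := by
  simp [Riem, Γpp_contract_eq_zero hH h0, Γpp_mul_Γpp_contract_eq_zero hH h0, pd_zero]

lemma Ricci_eq_sum_pd_Γpp (b ν : Fin 4) (p : Fin 4 → ℝ) :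
    Ricci H b ν p = ∑ a, pd a (Γpp H a b ν) p :=
  Finset.sum_congr rfl fun a _ => Riem_contract_eq_pd hH h0 a b ν p

end ParallelNullVector

lemma Ricci_eq (hH : ContDiff ℝ 2 H) (h0 : ∀ p, pd 0 H p = 0) (b ν : Fin 4) (p : Fin 4 → ℝ) :
    Ricci H b ν p = if b = 1 ∧ ν = 1 then pd 2 (pd 2 H) p + pd 3 (pd 3 H) p else 0 := by
  have hH' : Differentiable ℝ H := hH.differentiable two_ne_zero
  rw [Ricci_eq_sum_pd_Γpp hH' h0, Fin.sum_univ_four, Γpp_zero_eq hH' h0, Γpp_one_eq_zero hH' h0,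
    Γpp_transverse_eq hH' 2 (by decide), Γpp_transverse_eq hH' 3 (by decide)]
  fin_cases b <;> fin_cases ν <;> simp [pd_zero_pd hH h0, pd_zero, ← Pi.zero_def]

/-- For the pp-wave metric the only nonzero Ricci component is
`Ric₁₁ = ∂₂∂₂H + ∂₃∂₃H`. -/
theorem pp_wave_ricci (H : (Fin 4 → ℝ) → ℝ)
    (hH : ContDiff ℝ (⊤ : ℕ∞) H) (h0 : ∀ p, pd 0 H p = 0) (p : Fin 4 → ℝ) :
    Ricci H 1 1 p = pd 2 (pd 2 H) p + pd 3 (pd 3 H) p ∧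
    ∀ a b : Fin 4, (a, b) ≠ ((1 : Fin 4), (1 : Fin 4)) → Ricci H a b p = 0 := by
  have hH2 : ContDiff ℝ 2 H := hH.of_le (by decide)
  refine ⟨by simp [Ricci_eq hH2 h0], fun a b hab => ?_⟩
  rw [Ricci_eq hH2 h0, if_neg (by simpa [Prod.ext_iff] using hab)]
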